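/- For all real numbers a > 0 and b > 0, the two six-point configurations in ℝ³ given by X_L(a,b) = ((0,0,b), (0,0,−b), (a,a,a), (a,a,−a), (−a,−a,a), (−a,−a,−a)) and X_R(a,b) = ((0,0,b), (0,0,−b), (a,a,a), (−a,a,a), (a,−a,−a), (−a,−a,−a)) are not congruent: there is no permutation σ of Fin 6 such that dist (X_L i) (X_L j) = dist (X_R (σ i)) (X_R (σ j)) for all i, j. (X_L consists of two opposite vertices of a regular octahedron together with four coplanar cube vertices — all six points lie on the plane x = y — while in X_R the six points are not coplanar.) -/

import Mathlib

/-!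
Congruence preserves affine independence: by polarization the inner products of the edge vectors
`p i -ᵥ p i₀` are determined by the pairwise distances, hence so is `‖∑ g i • (p i -ᵥ p i₀)‖²`,
and with it the set of linear relations among the edge vectors. All six points of `X_L` lie on
the plane `x = y`, so no four of them are affinely independent, whereas the first four points
of `X_R` are.
-/

/-- The left configuration `X_L(a,b)`: two opposite vertices of a regular octahedron
together with four coplanar cube vertices (all six points lie on the plane `x = y`). -/
noncomputable def XL (a b : ℝ) : Fin 6 → EuclideanSpace ℝ (Fin 3) :=
  ![!₂[0, 0, b], !₂[0, 0, -b], !₂[a, a, a], !₂[a, a, -a], !₂[-a, -a, a], !₂[-a, -a, -a]]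

/-- The right configuration `X_R(a,b)`: two opposite vertices of a regular octahedron
together with four non-coplanar cube vertices. -/
noncomputable def XR (a b : ℝ) : Fin 6 → EuclideanSpace ℝ (Fin 3) :=
  ![!₂[0, 0, b], !₂[0, 0, -b], !₂[a, a, a], !₂[-a, a, a], !₂[a, -a, -a], !₂[-a, -a, -a]]

open Module Set
open scoped RealInnerProductSpace Congruent

section

variable {ι E F : Type*} [NormedAddCommGroup E] [InnerProductSpace ℝ E]
  [NormedAddCommGroup F] [InnerProductSpace ℝ F]

theorem linearIndependent_iff_of_inner_eq {v : ι → E} {w : ι → F}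
    (h : ∀ i j, ⟪v i, v j⟫ = ⟪w i, w j⟫) :
    LinearIndependent ℝ v ↔ LinearIndependent ℝ w := by
  have hnorm (s : Finset ι) (g : ι → ℝ) :
      ‖∑ i ∈ s, g i • v i‖ ^ 2 = ‖∑ i ∈ s, g i • w i‖ ^ 2 := by
    simp only [← real_inner_self_eq_norm_sq, sum_inner, inner_sum, real_inner_smul_left,
      real_inner_smul_right, h]
  have hzero (s : Finset ι) (g : ι → ℝ) :
      ∑ i ∈ s, g i • v i = 0 ↔ ∑ i ∈ s, g i • w i = 0 := by
    rw [← norm_eq_zero, ← sq_eq_zero_iff, hnorm, sq_eq_zero_iff, norm_eq_zero]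
  simp only [linearIndependent_iff', hzero]

variable {P Q : Type*} [MetricSpace P] [NormedAddTorsor E P] [MetricSpace Q] [NormedAddTorsor F Q]

theorem inner_vsub_vsub_eq_dist_sq (p q r : P) :
    ⟪p -ᵥ r, q -ᵥ r⟫ = (dist p r ^ 2 + dist q r ^ 2 - dist p q ^ 2) / 2 := by
  rw [real_inner_eq_norm_mul_self_add_norm_mul_self_sub_norm_sub_mul_self_div_two,
    vsub_sub_vsub_cancel_right, dist_eq_norm_vsub E, dist_eq_norm_vsub E, dist_eq_norm_vsub E]
  ring

theorem Congruent.affineIndependent_iff {p : ι → P} {q : ι → Q} (h : p ≅ q) :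
    AffineIndependent ℝ p ↔ AffineIndependent ℝ q := by
  rcases isEmpty_or_nonempty ι with _ | ⟨⟨i₀⟩⟩
  · exact iff_of_true (affineIndependent_of_subsingleton ℝ p)
      (affineIndependent_of_subsingleton ℝ q)
  rw [affineIndependent_iff_linearIndependent_vsub ℝ p i₀,
    affineIndependent_iff_linearIndependent_vsub ℝ q i₀]
  refine linearIndependent_iff_of_inner_eq fun i j => ?_
  simp only [inner_vsub_vsub_eq_dist_sq, h.dist_eq]

theorem coplanar_of_forall_inner_eq (hE : finrank ℝ E = 3) {n : E} (hn : n ≠ 0) {c : ℝ}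
    {s : Set E} (hs : ∀ p ∈ s, ⟪n, p⟫ = c) : Coplanar ℝ s := by
  have : Fact (finrank ℝ E = 2 + 1) := ⟨hE⟩
  have : FiniteDimensional ℝ E := .of_fact_finrank_eq_succ 2
  have hspan : vectorSpan ℝ s ≤ (ℝ ∙ n)ᗮ := by
    rw [vectorSpan_def, Submodule.span_le]
    rintro _ ⟨p, hp, q, hq, rfl⟩
    rw [SetLike.mem_coe, Submodule.mem_orthogonal_singleton_iff_inner_right]
    dsimp only
    rw [vsub_eq_sub, inner_sub_right, hs p hp, hs q hq, sub_self]
  rw [coplanar_iff_finrank_le_two]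
  exact (Submodule.finrank_mono hspan).trans (Submodule.finrank_orthogonal_span_singleton hn).le

end

theorem affineIndependent_iff_not_coplanar {k V P : Type*} [DivisionRing k] [AddCommGroup V]
    [Module k V] [AddTorsor V P] {p : Fin 4 → P} :
    AffineIndependent k p ↔ ¬ Coplanar k (range p) := by
  rw [affineIndependent_iff_le_finrank_vectorSpan k p (n := 3) (by simp),
    coplanar_iff_finrank_le_two]
  omega

theorem coplanar_range_XL (a b : ℝ) : Coplanar ℝ (range (XL a b)) := by
  refine coplanar_of_forall_inner_eq finrank_euclideanSpace_fin (n := !₂[1, -1, 0]) ?_ (c := 0) ?_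
  · intro h
    simpa using congrArg (· 0) h
  · rintro _ ⟨i, rfl⟩
    fin_cases i <;> simp [XL, PiLp.inner_apply, Fin.sum_univ_three]

theorem affineIndependent_XR_comp_castLE {a b : ℝ} (ha : a ≠ 0) (hb : b ≠ 0) :
    AffineIndependent ℝ (XR a b ∘ Fin.castLE (show 4 ≤ 6 by norm_num)) := by
  rw [affineIndependent_iff_of_fintype]
  intro w hw hv
  rw [Finset.weightedVSub_eq_linear_combination _ hw] at hv
  have h0 := congrArg (· 0) hv
  have h1 := congrArg (· 1) hv
  have h2 := congrArg (· 2) hv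
  simp only [Fin.sum_univ_four, XR, Function.comp_apply, Fin.castLE_zero, Fin.reduceCastLE,
    Matrix.cons_val_zero, Matrix.cons_val_one, Matrix.cons_val, PiLp.add_apply, PiLp.smul_apply,
    PiLp.zero_apply, smul_eq_mul, mul_zero, mul_neg, add_zero, zero_add] at hw h0 h1 h2
  have hw2 : w 2 = 0 := (mul_eq_zero.1 (by linarith : w 2 * a = 0)).resolve_right ha
  have hw3 : w 3 = 0 := (mul_eq_zero.1 (by linarith : w 3 * a = 0)).resolve_right ha
  have hw01 : w 0 = w 1 := mul_right_cancel₀ hb (by linarith)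
  intro i
  fin_cases i <;> dsimp <;> linarith

theorem XL_XR_not_congruent (a b : ℝ) (ha : 0 < a) (hb : 0 < b) :
    ¬ ∃ σ : Equiv.Perm (Fin 6),
        ∀ i j, dist (XL a b i) (XL a b j) = dist (XR a b (σ i)) (XR a b (σ j)) := by
  rintro ⟨σ, h⟩
  let f : Fin 4 → Fin 6 := Fin.castLE (show 4 ≤ 6 by norm_num)
  have hcong : XL a b ∘ σ.symm ∘ f ≅ XR a b ∘ f := Congruent.of_dist_eq fun i j => by
    simpa using h (σ.symm (f i)) (σ.symm (f j))
  have hXL : ¬ AffineIndependent ℝ (XL a b ∘ σ.symm ∘ f) := by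
    rw [affineIndependent_iff_not_coplanar, not_not]
    exact (coplanar_range_XL a b).subset (range_comp_subset_range _ _)
  exact hXL (hcong.affineIndependent_iff.mpr (affineIndependent_XR_comp_castLE ha.ne' hb.ne'))
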